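/- Let K be a finite simplicial complex and σ a nonempty simplex of K. Then the map λ ∈ lk_K(σ) ↦ σ * λ ∈ st_K(σ) induces an isomorphism of simplicial complexes sd(sd(∂σ) * sd(lk_K(σ))) → lk_{sd²(K)}(σ̂̂), where σ̂̂ denotes the vertex of sd²(K) corresponding to the vertex σ̂ of sd(K), and ∂σ is the boundary complex of σ. -/
import Mathlib


/-!
Common combinatorial framework for Morse shellings of simplicial complexes,
following J.-Y. Welschinger, "Morse shellings out of discrete Morse functions".
-/

namespace MorseShelling

variable {V : Type*} [DecidableEq V] {W : Type*} [DecidableEq W]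

/-- A (finite, combinatorial) simplicial complex: a downward-closed collection of
finite subsets (simplices) of the vertex type. -/
def IsComplex (K : Finset (Finset V)) : Prop :=
  ∀ σ ∈ K, ∀ τ ⊆ σ, τ ∈ K

/-- A relative simplicial complex `S = K \ L`, recorded as the pair `(K, L)`. -/
structure RelCplx (V : Type*) where
  K : Finset (Finset V)
  L : Finset (Finset V)

/-- The faces of a relative simplicial complex. -/
def RelCplx.faces (S : RelCplx V) : Finset (Finset V) := S.K \ S.L

/-- Validity of a relative simplicial complex: both members are complexes and
`L` is a subcomplex of `K`. -/
def RelCplx.IsValid (S : RelCplx V) : Prop :=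
  IsComplex S.K ∧ IsComplex S.L ∧ S.L ⊆ S.K

/-- Join of two collections of faces (on disjoint vertex supports). -/
def joinF (K₁ K₂ : Finset (Finset V)) : Finset (Finset V) :=
  (K₁ ×ˢ K₂).image fun p => p.1 ∪ p.2

/-- Join of two relative simplicial complexes:
`(K₁ * K₂) \ ((L₁ * K₂) ∪ (K₁ * L₂))`. -/
def RelCplx.join (S₁ S₂ : RelCplx V) : RelCplx V :=
  ⟨joinF S₁.K S₂.K, joinF S₁.L S₂.K ∪ joinF S₁.K S₂.L⟩

/-- The star of a simplex `σ` in `K` : all faces `τ` with `σ ∪ τ ∈ K`. -/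
def star (K : Finset (Finset V)) (σ : Finset V) : Finset (Finset V) :=
  K.filter fun τ => σ ∪ τ ∈ K

/-- The link of a simplex `σ` in `K` : all faces `τ` of the star disjoint from `σ`. -/
def link (K : Finset (Finset V)) (σ : Finset V) : Finset (Finset V) :=
  K.filter fun τ => σ ∪ τ ∈ K ∧ σ ∩ τ = ∅

/-- The star of a simplex in a relative complex, `st_S(σ) = st_K(σ) \ st_L(σ)`. -/
def RelCplx.starR (S : RelCplx V) (σ : Finset V) : RelCplx V :=
  ⟨star S.K σ, star S.L σ⟩

/-- The link of a simplex in a relative complex, `lk_S(σ) = lk_K(σ) \ lk_L(σ)`. -/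
def RelCplx.linkR (S : RelCplx V) (σ : Finset V) : RelCplx V :=
  ⟨link S.K σ, link S.L σ⟩

/-- The boundary complex of a simplex: all its proper faces (including `∅`). -/
def boundary (σ : Finset V) : Finset (Finset V) := σ.powerset.erase σ

/-- First barycentric subdivision: the faces are the (possibly empty) flags
`∅ ≠ σ₀ ⊊ σ₁ ⊊ ... ⊊ σ_q` of nonempty faces of `K`, a nonempty face `σ` of `K`
becoming the vertex `σ̂ = σ`. By convention `sd ∅ = ∅`. -/
def sd (K : Finset (Finset V)) : Finset (Finset (Finset V)) :=
  if K = ∅ then ∅ else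
    (K.erase ∅).powerset.filter fun c => ∀ a ∈ c, ∀ b ∈ c, a ⊆ b ∨ b ⊆ a

/-- First barycentric subdivision of a relative complex: `sd (K \ L) = sd K \ sd L`. -/
def RelCplx.sdR (S : RelCplx V) : RelCplx (Finset V) := ⟨sd S.K, sd S.L⟩

/-- An (absolute) simplicial complex seen as a relative one. -/
def toRel (K : Finset (Finset V)) : RelCplx V := ⟨K, ∅⟩

/-- The vertex support of a relative complex. -/
def suppK (S : RelCplx V) : Finset V := S.K.sup id

/-- The ridges (codimension one faces) of a simplex. -/
def ridges (σ : Finset V) : Finset (Finset V) := σ.image fun v => σ.erase v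

/-- The subcomplex of the simplex `σ` consisting of the faces contained in some
member of `R`. -/
def below (σ : Finset V) (R : Finset (Finset V)) : Finset (Finset V) :=
  σ.powerset.filter fun τ => ∃ ρ ∈ R, τ ⊆ ρ

/-- The restriction set of the basic tile `σ \ R`: the face spanned by the
vertices opposite to the missing ridges `R`. -/
def restSet (σ : Finset V) (R : Finset (Finset V)) : Finset V :=
  σ.filter fun v => σ.erase v ∈ R

/-- A basic tile of dimension `n` and order `k`: an `n`-simplex deprived of `k`
of its ridges (together with all the faces contained in them). -/
def IsBasicTile (S : RelCplx V) (n k : ℕ) : Prop :=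
  ∃ σ : Finset V, σ.card = n + 1 ∧ S.K = σ.powerset ∧
    ∃ R ⊆ ridges σ, R.card = k ∧ S.L = below σ R

/-- A Morse tile of dimension `n` and order `k`: a basic tile, possibly further
deprived of a unique face of higher codimension (its Morse face). -/
def IsMorseTile (S : RelCplx V) (n k : ℕ) : Prop :=
  ∃ σ : Finset V, σ.card = n + 1 ∧ S.K = σ.powerset ∧
    ∃ R ⊆ ridges σ, R.card = k ∧
      (S.L = below σ R ∨
        ∃ μ ⊆ σ, μ ∉ below σ R ∧ μ.card + 2 ≤ σ.card ∧
          S.L = below σ R ∪ below σ {μ})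

/-- A critical tile of dimension `n` and index `k`: either a closed simplex
(index `0`), or a basic tile of order `k` deprived of its restriction set
(this includes the dotted simplex for `k = 0` and the open simplex for `k = n`). -/
def IsCriticalTile (S : RelCplx V) (n k : ℕ) : Prop :=
  ∃ σ : Finset V, σ.card = n + 1 ∧ S.K = σ.powerset ∧
    ((k = 0 ∧ S.L = ∅) ∨
      (k ≤ n ∧ ∃ R ⊆ ridges σ, R.card = k ∧
        S.L = below σ R ∪ below σ {restSet σ R}))

/-- A closed simplex, as a tile. -/
def IsClosedSimplexTile (S : RelCplx V) : Prop :=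
  ∃ σ : Finset V, S.K = σ.powerset ∧ S.L = ∅

/-- An open simplex, as a tile: deprived of its whole boundary, incl. the empty face. -/
def IsOpenSimplexTile (S : RelCplx V) : Prop :=
  ∃ σ : Finset V, σ ≠ ∅ ∧ S.K = σ.powerset ∧ S.L = σ.powerset.erase σ

/-- The closed simplex on vertex set `σ`, as a relative complex. -/
def closedT (σ : Finset V) : RelCplx V := ⟨σ.powerset, ∅⟩

/-- The open simplex on vertex set `σ`. -/
def openT (σ : Finset V) : RelCplx V := ⟨σ.powerset, σ.powerset.erase σ⟩

/-- The closed simplex deprived of its empty face, `σ̇` (the neutral tile when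
`σ = ∅`, so that empty factors may be dropped from joins). -/
def dotT (σ : Finset V) : RelCplx V := ⟨σ.powerset, if σ = ∅ then ∅ else {∅}⟩

/-- The Morse tile `σ * θ̊ * τ̇`. -/
def splitTile (σ θ τ : Finset V) : RelCplx V :=
  (closedT σ).join ((openT θ).join (dotT τ))

/-- A tiling of a relative simplicial complex by `N` relative facets: the tiles
are relative simplices whose underlying simplices are facets, and their faces
partition the faces of `S`. -/
structure Tiling (S : RelCplx W) (N : ℕ) where
  tile : Fin N → RelCplx W
  isFacet : ∀ i, ∃ σ ∈ S.K, (∀ τ ∈ S.K, σ ⊆ τ → τ = σ) ∧ (tile i).K = σ.powerset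
  subL : ∀ i, (tile i).L ⊆ (tile i).K
  disj : ∀ i j, i ≠ j → Disjoint (tile i).faces (tile j).faces
  cover : (Finset.univ : Finset (Fin N)).biUnion (fun i => (tile i).faces) = S.faces

/-- The union of the faces of the first `p` tiles of a tiling. -/
def Tiling.prefixFaces {S : RelCplx W} {N : ℕ} (T : Tiling S N) (p : ℕ) :
    Finset (Finset W) :=
  (Finset.univ.filter fun i : Fin N => (i : ℕ) < p).biUnion fun i => (T.tile i).faces

/-- A tiling is a shelling when each of the sets of faces of `S_p = K_p \ L`
is a relative subcomplex, i.e. `L ∪ (tiles of index < p)` is a complex. -/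
def Tiling.IsShelling {S : RelCplx W} {N : ℕ} (T : Tiling S N) : Prop :=
  ∀ p ≤ N, IsComplex (S.L ∪ T.prefixFaces p)

/-- A (shelled) tiling begins with a set `F` of faces when some initial segment
of its tiles partitions exactly `F`. -/
def Tiling.BeginsWith {S : RelCplx W} {N : ℕ} (T : Tiling S N)
    (F : Finset (Finset W)) : Prop :=
  ∃ p ≤ N, T.prefixFaces p = F

/-- A Morse tiling: all tiles are Morse tiles. -/
def Tiling.IsMorse {S : RelCplx W} {N : ℕ} (T : Tiling S N) : Prop :=
  ∀ i, ∃ n k, IsMorseTile (T.tile i) n k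

/-- An h-tiling: all tiles are basic or critical tiles. -/
def Tiling.IsH {S : RelCplx W} {N : ℕ} (T : Tiling S N) : Prop :=
  ∀ i, (∃ n k, IsBasicTile (T.tile i) n k) ∨ (∃ n k, IsCriticalTile (T.tile i) n k)

/-- `f` induces a simplicial isomorphism from `A` onto `B` (both viewed through
their collections of faces). -/
def IsSimplicialIso (f : V → W) (A : Finset (Finset V)) (B : Finset (Finset W)) : Prop :=
  Set.BijOn (fun σ : Finset V => σ.image f) ↑A ↑B

/-- `f` induces an isomorphism of relative simplicial complexes. -/
def IsRelIso (f : V → W) (S : RelCplx V) (S' : RelCplx W) : Prop :=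
  Set.BijOn (fun σ : Finset V => σ.image f) ↑S.K ↑S'.K ∧
    Set.BijOn (fun σ : Finset V => σ.image f) ↑S.L ↑S'.L

/-- The first derived neighborhood `N(L, K)` of a subcomplex `L` in `K` : the union
of the stars in `sd K` of the vertices of `L`. -/
def derivedNbhd (L K : Finset (Finset V)) : Finset (Finset (Finset V)) :=
  (L.filter fun s => s.card = 1).biUnion fun s => star (sd K) {s}

/-- The faces of the derived neighborhood `N(T, S)` of a tile `T` in a relative
complex `S`: the union of the relative stars in `sd S` of the vertices of `T`. -/
def relDerivedNbhd (T S : RelCplx V) : Finset (Finset (Finset V)) :=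
  ((suppK T).biUnion fun v => ((S.sdR).starR {({v} : Finset V)}).faces) ∩ (S.sdR).faces

/-- A discrete Morse function on the finite simplicial complex `K`. -/
def IsDiscreteMorse (K : Finset (Finset V)) (f : Finset V → ℝ) : Prop :=
  ∀ σ ∈ K, σ ≠ ∅ →
    (K.filter fun τ => σ ⊂ τ ∧ f τ ≤ f σ).card ≤ 1 ∧
    (K.filter fun θ => θ ≠ ∅ ∧ θ ⊂ σ ∧ f σ ≤ f θ).card ≤ 1

/-- A critical face of a discrete Morse function. -/
def IsCriticalFace (K : Finset (Finset V)) (f : Finset V → ℝ) (σ : Finset V) : Prop :=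
  σ ∈ K ∧ σ ≠ ∅ ∧ (∀ τ ∈ K, σ ⊂ τ → f σ < f τ) ∧
    ∀ θ ∈ K, θ ≠ ∅ → θ ⊂ σ → f θ < f σ

/-- An elementary collapse: removal of a facet `τ` together with a ridge `θ` of it
contained in no other facet. -/
def ElementaryCollapse (K K' : Finset (Finset V)) : Prop :=
  ∃ τ ∈ K, ∃ θ ∈ K, θ ⊆ τ ∧ τ.card = θ.card + 1 ∧
    (∀ ρ ∈ K, τ ⊆ ρ → ρ = τ) ∧
    (∀ ρ ∈ K, θ ⊆ ρ → ρ = θ ∨ ρ = τ) ∧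
    K' = (K.erase τ).erase θ

/-- A finite simplicial complex is collapsible when some finite sequence of
elementary collapses reduces it to a single vertex. -/
def Collapsible (K : Finset (Finset V)) : Prop :=
  ∃ v : V, Relation.ReflTransGen ElementaryCollapse K {∅, {v}}

section AuxLink

variable {V' : Type*} [DecidableEq V']

lemma mem_sd_iff {K : Finset (Finset V')} (hK : K ≠ ∅) {t : Finset (Finset V')} :
    t ∈ sd K ↔ (∀ a ∈ t, a ∈ K ∧ a ≠ ∅) ∧ ∀ a ∈ t, ∀ b ∈ t, a ⊆ b ∨ b ⊆ a := by
  simp only [sd, if_neg hK, Finset.mem_filter, Finset.mem_powerset, Finset.subset_iff,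
    Finset.mem_erase]
  constructor
  · rintro ⟨h1, h2⟩
    exact ⟨fun a ha => ⟨(h1 ha).2, (h1 ha).1⟩, h2⟩
  · rintro ⟨h1, h2⟩
    exact ⟨fun {a} ha => ⟨(h1 a ha).2, (h1 a ha).1⟩, h2⟩

lemma mem_joinF {K₁ K₂ : Finset (Finset V')} {c : Finset V'} :
    c ∈ joinF K₁ K₂ ↔ ∃ a ∈ K₁, ∃ b ∈ K₂, a ∪ b = c := by
  simp only [joinF, Finset.mem_image, Finset.mem_product, Prod.exists]
  tauto

end AuxLink

/-- **Corollary (links in the second barycentric subdivision).** For every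
nonempty simplex `σ` of `K`, the map `λ ∈ lk_K(σ) ↦ σ * λ` induces an
isomorphism of simplicial complexes
`sd(sd(∂σ) * sd(lk_K(σ))) → lk_{sd² K}(σ̂̂)`. -/
theorem link_in_sd_sd
    {V : Type*} [DecidableEq V] (K : Finset (Finset V)) (hK : IsComplex K)
    (σ : Finset V) (hσ : σ ∈ K) (hne : σ ≠ ∅) :
    IsSimplicialIso
      (fun c : Finset (Finset V) =>
        insert σ (Finset.image (fun μ : Finset V => if μ ⊆ σ then μ else σ ∪ μ) c))
      (sd (joinF (sd (boundary σ)) (sd (link K σ))))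
      (link (sd (sd K)) {{σ}}) := by
  have hKne : K ≠ ∅ := Finset.ne_empty_of_mem hσ
  have hemK : (∅ : Finset V) ∈ K := hK σ hσ ∅ (Finset.empty_subset σ)
  have hbne : boundary σ ≠ ∅ := by
    refine Finset.ne_empty_of_mem (a := (∅ : Finset V)) ?_
    simp only [boundary, Finset.mem_erase, Finset.mem_powerset]
    exact ⟨Ne.symm hne, Finset.empty_subset σ⟩
  have hlne : link K σ ≠ ∅ := by
    refine Finset.ne_empty_of_mem (a := (∅ : Finset V)) ?_
    simp only [link, Finset.mem_filter, Finset.union_empty, Finset.inter_empty]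
    exact ⟨hemK, hσ, trivial⟩
  have memVb : ∀ μ : Finset V, μ ∈ boundary σ ∧ μ ≠ ∅ ↔ (μ ≠ ∅ ∧ μ ⊆ σ ∧ μ ≠ σ) := by
    intro μ; simp only [boundary, Finset.mem_erase, Finset.mem_powerset]; tauto
  have memVl : ∀ μ : Finset V, μ ∈ link K σ ∧ μ ≠ ∅ ↔
      (μ ≠ ∅ ∧ μ ∈ K ∧ σ ∪ μ ∈ K ∧ σ ∩ μ = ∅) := by
    intro μ; simp only [link, Finset.mem_filter]; tauto
  have hnotsub : ∀ μ : Finset V, μ ≠ ∅ → σ ∩ μ = ∅ → ¬ μ ⊆ σ := by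
    intro μ h1 h2 hsub
    exact h1 ((Finset.inter_eq_right.mpr hsub).symm.trans h2)
  set g : Finset V → Finset V := fun μ => if μ ⊆ σ then μ else σ ∪ μ with hgdef
  set J := joinF (sd (boundary σ)) (sd (link K σ)) with hJdef
  -- characterization of membership in the join J
  have memJ : ∀ c : Finset (Finset V), c ∈ J ↔
      c.filter (fun μ => μ ⊆ σ) ∈ sd (boundary σ) ∧
      c.filter (fun μ => ¬ μ ⊆ σ) ∈ sd (link K σ) := by
    intro c
    constructor
    · intro hc
      rw [hJdef, mem_joinF] at hc
      obtain ⟨a, ha, b, hb, rfl⟩ := hc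
      have ha' := (mem_sd_iff hbne).mp ha
      have hb' := (mem_sd_iff hlne).mp hb
      have hfa : (a ∪ b).filter (fun μ => μ ⊆ σ) = a := by
        ext μ
        simp only [Finset.mem_filter, Finset.mem_union]
        constructor
        · rintro ⟨hμ | hμ, hsub⟩
          · exact hμ
          · have := (memVl μ).mp ⟨(hb'.1 μ hμ).1, (hb'.1 μ hμ).2⟩
            exact absurd hsub (hnotsub μ this.1 this.2.2.2)
        · intro hμ
          have := (memVb μ).mp ⟨(ha'.1 μ hμ).1, (ha'.1 μ hμ).2⟩
          exact ⟨Or.inl hμ, this.2.1⟩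
      have hfb : (a ∪ b).filter (fun μ => ¬ μ ⊆ σ) = b := by
        ext μ
        simp only [Finset.mem_filter, Finset.mem_union]
        constructor
        · rintro ⟨hμ | hμ, hsub⟩
          · have := (memVb μ).mp ⟨(ha'.1 μ hμ).1, (ha'.1 μ hμ).2⟩
            exact absurd this.2.1 hsub
          · exact hμ
        · intro hμ
          have := (memVl μ).mp ⟨(hb'.1 μ hμ).1, (hb'.1 μ hμ).2⟩
          exact ⟨Or.inr hμ, hnotsub μ this.1 this.2.2.2⟩
      rw [hfa, hfb]; exact ⟨ha, hb⟩
    · rintro ⟨h1, h2⟩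
      rw [hJdef, mem_joinF]
      exact ⟨_, h1, _, h2, Finset.filter_union_filter_not_eq _ c⟩
  -- facts about elements of members of J
  have hJelem : ∀ c ∈ J, ∀ μ ∈ c,
      (μ ≠ ∅ ∧ μ ⊆ σ ∧ μ ≠ σ) ∨ (μ ≠ ∅ ∧ μ ∈ K ∧ σ ∪ μ ∈ K ∧ σ ∩ μ = ∅ ∧ ¬ μ ⊆ σ) := by
    intro c hc μ hμ
    obtain ⟨h1, h2⟩ := (memJ c).mp hc
    by_cases hsub : μ ⊆ σ
    · left
      have := ((mem_sd_iff hbne).mp h1).1 μ (Finset.mem_filter.mpr ⟨hμ, hsub⟩)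
      exact (memVb μ).mp ⟨this.1, this.2⟩
    · right
      have := ((mem_sd_iff hlne).mp h2).1 μ (Finset.mem_filter.mpr ⟨hμ, hsub⟩)
      have h3 := (memVl μ).mp ⟨this.1, this.2⟩
      exact ⟨h3.1, h3.2.1, h3.2.2.1, h3.2.2.2, hsub⟩
  have hgsub : ∀ μ : Finset V, μ ⊆ σ → g μ = μ := fun μ h => if_pos h
  have hgnot : ∀ μ : Finset V, ¬ μ ⊆ σ → g μ = σ ∪ μ := fun μ h => if_neg h
  have hgne : ∀ c ∈ J, ∀ μ ∈ c, g μ ≠ σ := by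
    intro c hc μ hμ
    rcases hJelem c hc μ hμ with ⟨h1, h2, h3⟩ | ⟨h1, _, _, h4, h5⟩
    · rw [hgsub μ h2]; exact h3
    · rw [hgnot μ h5]
      intro he
      exact h5 (by rw [← he]; exact Finset.subset_union_right)
  have hgcompσ : ∀ c ∈ J, ∀ μ ∈ c, g μ ⊆ σ ∨ σ ⊆ g μ := by
    intro c hc μ hμ
    rcases hJelem c hc μ hμ with ⟨_, h2, _⟩ | ⟨_, _, _, _, h5⟩
    · rw [hgsub μ h2]; exact Or.inl h2
    · rw [hgnot μ h5]; exact Or.inr Finset.subset_union_left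
  have hgK : ∀ c ∈ J, ∀ μ ∈ c, g μ ∈ K ∧ g μ ≠ ∅ := by
    intro c hc μ hμ
    rcases hJelem c hc μ hμ with ⟨h1, h2, _⟩ | ⟨h1, _, h3, _, h5⟩
    · rw [hgsub μ h2]; exact ⟨hK σ hσ μ h2, h1⟩
    · rw [hgnot μ h5]
      refine ⟨h3, fun he => hne (Finset.union_eq_empty.mp he).1⟩
  have hginj : ∀ c ∈ J, ∀ c' ∈ J, ∀ μ ∈ c, ∀ ν ∈ c', g μ = g ν → μ = ν := by
    intro c hc c' hc' μ hμ ν hν he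
    rcases hJelem c hc μ hμ with ⟨h1, h2, h3⟩ | ⟨h1, _, _, h4, h5⟩ <;>
      rcases hJelem c' hc' ν hν with ⟨k1, k2, k3⟩ | ⟨k1, _, _, k4, k5⟩
    · rwa [hgsub μ h2, hgsub ν k2] at he
    · rw [hgsub μ h2, hgnot ν k5] at he
      have hσμ : σ ⊆ μ := by rw [he]; exact Finset.subset_union_left
      exact absurd (Finset.Subset.antisymm h2 hσμ) h3
    · rw [hgnot μ h5, hgsub ν k2] at he
      have hσν : σ ⊆ ν := by rw [← he]; exact Finset.subset_union_left
      exact absurd (Finset.Subset.antisymm k2 hσν) k3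
    · rw [hgnot μ h5, hgnot ν k5] at he
      have hd1 : Disjoint σ μ := Finset.disjoint_iff_inter_eq_empty.mpr h4
      have hd2 : Disjoint σ ν := Finset.disjoint_iff_inter_eq_empty.mpr k4
      calc μ = (σ ∪ μ) \ σ := (Finset.union_sdiff_cancel_left hd1).symm
        _ = (σ ∪ ν) \ σ := by rw [he]
        _ = ν := Finset.union_sdiff_cancel_left hd2
  -- image of a member of J is a flag of K containing σ
  have hfsd : ∀ c ∈ J, insert σ (Finset.image g c) ∈ sd K := by
    intro c hc
    rw [mem_sd_iff hKne]
    obtain ⟨hb, hl⟩ := (memJ c).mp hc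
    have hbc := (mem_sd_iff hbne).mp hb
    have hlc := (mem_sd_iff hlne).mp hl
    constructor
    · intro a ha
      rcases Finset.mem_insert.mp ha with rfl | ha
      · exact ⟨hσ, hne⟩
      · obtain ⟨μ, hμ, rfl⟩ := Finset.mem_image.mp ha
        exact hgK c hc μ hμ
    · intro a ha b hbmem
      rcases Finset.mem_insert.mp ha with rfl | ha
      · rcases Finset.mem_insert.mp hbmem with rfl | hbm
        · exact Or.inl (subset_refl _)
        · obtain ⟨μ, hμ, rfl⟩ := Finset.mem_image.mp hbm
          exact (hgcompσ c hc μ hμ).symm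
      · obtain ⟨μ, hμ, rfl⟩ := Finset.mem_image.mp ha
        rcases Finset.mem_insert.mp hbmem with rfl | hbm
        · exact hgcompσ c hc μ hμ
        · obtain ⟨ν, hν, rfl⟩ := Finset.mem_image.mp hbm
          by_cases hμs : μ ⊆ σ <;> by_cases hνs : ν ⊆ σ
          · rw [hgsub μ hμs, hgsub ν hνs]
            exact hbc.2 μ (Finset.mem_filter.mpr ⟨hμ, hμs⟩) ν (Finset.mem_filter.mpr ⟨hν, hνs⟩)
          · rw [hgsub μ hμs, hgnot ν hνs]
            exact Or.inl (hμs.trans Finset.subset_union_left)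
          · rw [hgnot μ hμs, hgsub ν hνs]
            exact Or.inr (hνs.trans Finset.subset_union_left)
          · rw [hgnot μ hμs, hgnot ν hνs]
            rcases hlc.2 μ (Finset.mem_filter.mpr ⟨hμ, hμs⟩) ν (Finset.mem_filter.mpr ⟨hν, hνs⟩)
              with h | h
            · exact Or.inl (Finset.union_subset_union_right h)
            · exact Or.inr (Finset.union_subset_union_right h)
  have hfne : ∀ c ∈ J, c ≠ ∅ → insert σ (Finset.image g c) ≠ {σ} := by
    intro c hc hc0 he
    obtain ⟨μ, hμ⟩ := Finset.nonempty_iff_ne_empty.mpr hc0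
    have hmem : g μ ∈ ({σ} : Finset (Finset V)) := by
      rw [← he]; exact Finset.mem_insert_of_mem (Finset.mem_image_of_mem g hμ)
    exact hgne c hc μ hμ (Finset.mem_singleton.mp hmem)
  have hfrefl : ∀ c ∈ J, ∀ c' ∈ J,
      insert σ (Finset.image g c) ⊆ insert σ (Finset.image g c') → c ⊆ c' := by
    intro c hc c' hc' hsub μ hμ
    have hmem : g μ ∈ insert σ (Finset.image g c') :=
      hsub (Finset.mem_insert_of_mem (Finset.mem_image_of_mem g hμ))
    rcases Finset.mem_insert.mp hmem with he | hm
    · exact absurd he (hgne c hc μ hμ)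
    · obtain ⟨ν, hν, he⟩ := Finset.mem_image.mp hm
      have hmn := hginj c hc c' hc' μ hμ ν hν he.symm
      rwa [hmn]
  -- the inverse vertex map
  set finv : Finset (Finset V) → Finset (Finset V) :=
    fun c' => (c'.erase σ).image (fun μ => if μ ⊆ σ then μ else μ \ σ) with hfinvdef
  have hfinvelem : ∀ c' : Finset (Finset V), σ ∈ c' →
      (∀ a ∈ c', ∀ b ∈ c', a ⊆ b ∨ b ⊆ a) → ∀ x ∈ finv c',
      (x ∈ c' ∧ x ≠ σ ∧ x ⊆ σ) ∨ (∃ μ ∈ c', μ ≠ σ ∧ σ ⊆ μ ∧ x = μ \ σ ∧ ¬ x ⊆ σ) := by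
    intro c' hσc' hchain x hx
    simp only [hfinvdef, Finset.mem_image] at hx
    obtain ⟨μ, hμ, rfl⟩ := hx
    obtain ⟨hμσ, hμc⟩ := Finset.mem_erase.mp hμ
    by_cases hsub : μ ⊆ σ
    · rw [if_pos hsub]; exact Or.inl ⟨hμc, hμσ, hsub⟩
    · rw [if_neg hsub]
      have hσμ : σ ⊆ μ := (hchain μ hμc σ hσc').resolve_left hsub
      refine Or.inr ⟨μ, hμc, hμσ, hσμ, rfl, ?_⟩
      apply hnotsub
      · rw [Ne, Finset.sdiff_eq_empty_iff_subset]; exact hsub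
      · exact Finset.inter_sdiff_self σ μ
  have hfinvJ : ∀ c', c' ∈ sd K → σ ∈ c' → finv c' ∈ J := by
    intro c' hc' hσc'
    obtain ⟨helem, hchain⟩ := (mem_sd_iff hKne).mp hc'
    have hE := hfinvelem c' hσc' hchain
    rw [memJ]
    constructor
    · rw [mem_sd_iff hbne]
      constructor
      · intro x hx
        obtain ⟨hx1, hx2⟩ := Finset.mem_filter.mp hx
        rcases hE x hx1 with ⟨h1, h2, h3⟩ | ⟨μ, _, _, _, _, h5⟩
        · exact (memVb x).mpr ⟨(helem x h1).2, h3, h2⟩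
        · exact absurd hx2 h5
      · intro a ha b hb
        obtain ⟨ha1, ha2⟩ := Finset.mem_filter.mp ha
        obtain ⟨hb1, hb2⟩ := Finset.mem_filter.mp hb
        rcases hE a ha1 with ⟨h1, _, _⟩ | ⟨_, _, _, _, _, h5⟩
        · rcases hE b hb1 with ⟨k1, _, _⟩ | ⟨_, _, _, _, _, k5⟩
          · exact hchain a h1 b k1
          · exact absurd hb2 k5
        · exact absurd ha2 h5
    · rw [mem_sd_iff hlne]
      constructor
      · intro x hx
        obtain ⟨hx1, hx2⟩ := Finset.mem_filter.mp hx
        rcases hE x hx1 with ⟨_, _, h3⟩ | ⟨μ, hμ1, _, hσμ, rfl, h5⟩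
        · exact absurd h3 hx2
        · refine (memVl _).mpr ⟨?_, ?_, ?_, ?_⟩
          · intro he; exact h5 (he ▸ Finset.empty_subset σ)
          · exact hK μ (helem μ hμ1).1 _ Finset.sdiff_subset
          · rw [Finset.union_sdiff_of_subset hσμ]; exact (helem μ hμ1).1
          · exact Finset.inter_sdiff_self σ μ
      · intro a ha b hb
        obtain ⟨ha1, ha2⟩ := Finset.mem_filter.mp ha
        obtain ⟨hb1, hb2⟩ := Finset.mem_filter.mp hb
        rcases hE a ha1 with ⟨_, _, h3⟩ | ⟨μ, hμ1, _, _, rfl, _⟩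
        · exact absurd h3 ha2
        · rcases hE b hb1 with ⟨_, _, k3⟩ | ⟨ν, hν1, _, _, rfl, _⟩
          · exact absurd k3 hb2
          · rcases hchain μ hμ1 ν hν1 with h | h
            · exact Or.inl (Finset.sdiff_subset_sdiff h (subset_refl σ))
            · exact Or.inr (Finset.sdiff_subset_sdiff h (subset_refl σ))
  have hfinvf : ∀ c', c' ∈ sd K → σ ∈ c' →
      insert σ (Finset.image g (finv c')) = c' := by
    intro c' hc' hσc'
    obtain ⟨helem, hchain⟩ := (mem_sd_iff hKne).mp hc'
    simp only [hfinvdef, Finset.image_image]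
    have himg : (c'.erase σ).image (g ∘ fun μ => if μ ⊆ σ then μ else μ \ σ) = c'.erase σ := by
      have heq : ∀ μ ∈ c'.erase σ, (g ∘ fun μ => if μ ⊆ σ then μ else μ \ σ) μ = id μ := by
        intro μ hμ
        obtain ⟨hμσ, hμc⟩ := Finset.mem_erase.mp hμ
        by_cases hsub : μ ⊆ σ
        · simp only [Function.comp_apply, if_pos hsub, id]
          exact hgsub μ hsub
        · simp only [Function.comp_apply, if_neg hsub, id]
          have hσμ : σ ⊆ μ := (hchain μ hμc σ hσc').resolve_left hsub
          have hnd : ¬ μ \ σ ⊆ σ := by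
            apply hnotsub
            · rw [Ne, Finset.sdiff_eq_empty_iff_subset]; exact hsub
            · exact Finset.inter_sdiff_self σ μ
          rw [hgnot _ hnd, Finset.union_sdiff_of_subset hσμ]
      rw [Finset.image_congr (fun x hx => heq x hx), Finset.image_id]
    rw [himg, Finset.insert_erase hσc']
  have hfinvmono : ∀ c₁ c₂ : Finset (Finset V), c₁ ⊆ c₂ → finv c₁ ⊆ finv c₂ := by
    intro c₁ c₂ h
    simp only [hfinvdef]
    exact Finset.image_subset_image (Finset.erase_subset_erase σ h)
  have hfinvne : ∀ c' : Finset (Finset V), σ ∈ c' → c' ≠ {σ} → finv c' ≠ ∅ := by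
    intro c' hσc' hcne
    simp only [hfinvdef]
    rw [Ne, Finset.image_eq_empty]
    intro he
    rcases (Finset.erase_eq_empty_iff c' σ).mp he with h | h
    · exact absurd (h ▸ hσc') (Finset.notMem_empty σ)
    · exact hcne h
  -- characterization of the link in sd (sd K)
  have hσsd : {σ} ∈ sd K := by
    rw [mem_sd_iff hKne]
    constructor
    · intro a ha; rw [Finset.mem_singleton] at ha; subst ha; exact ⟨hσ, hne⟩
    · intro a ha b hb
      rw [Finset.mem_singleton] at ha hb; subst ha; subst hb; exact Or.inl (subset_refl _)
  have hsdKne : sd K ≠ ∅ := Finset.ne_empty_of_mem hσsd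
  have memLink : ∀ t : Finset (Finset (Finset V)), t ∈ link (sd (sd K)) {{σ}} ↔
      (∀ c ∈ t, c ∈ sd K ∧ σ ∈ c ∧ c ≠ {σ}) ∧ ∀ a ∈ t, ∀ b ∈ t, a ⊆ b ∨ b ⊆ a := by
    intro t
    simp only [link, Finset.mem_filter]
    constructor
    · rintro ⟨ht, hu, hi⟩
      have hu' := (mem_sd_iff hsdKne).mp hu
      have hnotmem : {σ} ∉ t := by
        intro h
        have hmem : {σ} ∈ ({{σ}} : Finset (Finset (Finset V))) ∩ t :=
          Finset.mem_inter.mpr ⟨Finset.mem_singleton_self _, h⟩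
        rw [hi] at hmem; exact Finset.notMem_empty _ hmem
      constructor
      · intro c hc
        have hcmem : c ∈ {{σ}} ∪ t := Finset.mem_union_right _ hc
        have h1 := hu'.1 c hcmem
        have hcomp := hu'.2 c hcmem {σ} (Finset.mem_union_left _ (Finset.mem_singleton_self _))
        refine ⟨h1.1, ?_, fun he => hnotmem (he ▸ hc)⟩
        rcases hcomp with h | h
        · rcases Finset.subset_singleton_iff.mp h with rfl | rfl
          · exact absurd rfl h1.2
          · exact Finset.mem_singleton_self σ
        · exact h (Finset.mem_singleton_self σ)
      · intro a ha b hb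
        exact hu'.2 a (Finset.mem_union_right _ ha) b (Finset.mem_union_right _ hb)
    · rintro ⟨h1, h2⟩
      have hnotmem : {σ} ∉ t := fun h => (h1 _ h).2.2 rfl
      refine ⟨?_, ?_, Finset.singleton_inter_of_notMem hnotmem⟩
      · rw [mem_sd_iff hsdKne]
        exact ⟨fun c hc => ⟨(h1 c hc).1, Finset.ne_empty_of_mem (h1 c hc).2.1⟩, h2⟩
      · rw [mem_sd_iff hsdKne]
        constructor
        · intro c hc
          rcases Finset.mem_union.mp hc with h | h
          · rw [Finset.mem_singleton] at h; subst h
            exact ⟨hσsd, Finset.ne_empty_of_mem (Finset.mem_singleton_self σ)⟩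
          · exact ⟨(h1 c h).1, Finset.ne_empty_of_mem (h1 c h).2.1⟩
        · intro a ha b hb
          rcases Finset.mem_union.mp ha with h | h <;> rcases Finset.mem_union.mp hb with k | k
          · rw [Finset.mem_singleton] at h k; subst h; subst k; exact Or.inl (subset_refl _)
          · rw [Finset.mem_singleton] at h; subst h
            exact Or.inl (Finset.singleton_subset_iff.mpr (h1 b k).2.1)
          · rw [Finset.mem_singleton] at k; subst k
            exact Or.inr (Finset.singleton_subset_iff.mpr (h1 a h).2.1)
          · exact h2 a h b k
  have hJmem : (∅ : Finset (Finset V)) ∈ J := by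
    rw [memJ]
    constructor
    · rw [Finset.filter_empty, mem_sd_iff hbne]
      exact ⟨fun a ha => absurd ha (Finset.notMem_empty a),
        fun a ha => absurd ha (Finset.notMem_empty a)⟩
    · rw [Finset.filter_empty, mem_sd_iff hlne]
      exact ⟨fun a ha => absurd ha (Finset.notMem_empty a),
        fun a ha => absurd ha (Finset.notMem_empty a)⟩
  have hJne : J ≠ ∅ := Finset.ne_empty_of_mem hJmem
  -- assemble the bijection
  refine ⟨?_, ?_, ?_⟩
  · -- MapsTo
    intro C hC
    simp only [Finset.mem_coe] at hC ⊢
    rw [mem_sd_iff hJne] at hC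
    rw [memLink]
    constructor
    · intro c' hc'
      obtain ⟨c, hcC, rfl⟩ := Finset.mem_image.mp hc'
      have hcJ := (hC.1 c hcC).1
      have hc0 := (hC.1 c hcC).2
      exact ⟨hfsd c hcJ, Finset.mem_insert_self σ _, hfne c hcJ hc0⟩
    · intro a ha b hb
      obtain ⟨c₁, h₁, rfl⟩ := Finset.mem_image.mp ha
      obtain ⟨c₂, h₂, rfl⟩ := Finset.mem_image.mp hb
      rcases hC.2 c₁ h₁ c₂ h₂ with h | h
      · exact Or.inl (Finset.insert_subset_insert σ (Finset.image_subset_image h))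
      · exact Or.inr (Finset.insert_subset_insert σ (Finset.image_subset_image h))
  · -- InjOn
    intro C₁ h₁ C₂ h₂ he
    simp only [Finset.mem_coe] at h₁ h₂
    rw [mem_sd_iff hJne] at h₁ h₂
    have hsub : ∀ A B : Finset (Finset (Finset V)),
        (∀ a ∈ A, a ∈ J ∧ a ≠ ∅) → (∀ a ∈ B, a ∈ J ∧ a ≠ ∅) →
        A.image (fun c => insert σ (Finset.image g c)) =
          B.image (fun c => insert σ (Finset.image g c)) → A ⊆ B := by
      intro A B hA hB hAB c hc
      have hmem : insert σ (Finset.image g c) ∈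
          B.image (fun c => insert σ (Finset.image g c)) := by
        rw [← hAB]; exact Finset.mem_image_of_mem _ hc
      obtain ⟨c', hc', he'⟩ := Finset.mem_image.mp hmem
      have hs1 : insert σ (Finset.image g c) ⊆ insert σ (Finset.image g c') := by
        rw [he']
      have hs2 : insert σ (Finset.image g c') ⊆ insert σ (Finset.image g c) := by
        rw [he']
      have h1 := hfrefl c (hA c hc).1 c' (hB c' hc').1 hs1
      have h2 := hfrefl c' (hB c' hc').1 c (hA c hc).1 hs2
      rwa [Finset.Subset.antisymm h1 h2]
    exact Finset.Subset.antisymm (hsub C₁ C₂ h₁.1 h₂.1 he) (hsub C₂ C₁ h₂.1 h₁.1 he.symm)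
  · -- SurjOn
    intro t ht
    simp only [Finset.mem_coe] at ht
    rw [memLink] at ht
    refine ⟨t.image finv, ?_, ?_⟩
    · simp only [Finset.mem_coe]
      rw [mem_sd_iff hJne]
      constructor
      · intro c hc
        obtain ⟨c', hc', rfl⟩ := Finset.mem_image.mp hc
        obtain ⟨k1, k2, k3⟩ := ht.1 c' hc'
        exact ⟨hfinvJ c' k1 k2, hfinvne c' k2 k3⟩
      · intro a ha b hb
        obtain ⟨c₁, h₁, rfl⟩ := Finset.mem_image.mp ha
        obtain ⟨c₂, h₂, rfl⟩ := Finset.mem_image.mp hb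
        rcases ht.2 c₁ h₁ c₂ h₂ with h | h
        · exact Or.inl (hfinvmono _ _ h)
        · exact Or.inr (hfinvmono _ _ h)
    · show Finset.image (fun c => insert σ (Finset.image g c)) (t.image finv) = t
      rw [Finset.image_image]
      have heq : ∀ c' ∈ t,
          ((fun c => insert σ (Finset.image g c)) ∘ finv) c' = id c' := by
        intro c' hc'
        obtain ⟨k1, k2, _⟩ := ht.1 c' hc'
        exact hfinvf c' k1 k2
      rw [Finset.image_congr (fun x hx => heq x hx), Finset.image_id]

end MorseShelling
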